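/- (Convergence of D-LADMM.) Assume Ω* is nonempty and Assumption 1 holds. Then for any initialization (Z_0, E_0, λ_0) there exist a constant sequence bound c > 0 and a sequence of parameters (W_k, θ_k, β_k) ∈ S(σ_k, A) with 0 ≤ σ_k ≤ c such that the D-LADMM iterates ω_k = (Z_k, E_k, −λ_k), generated by applying at step k the D-LADMM step with parameters (W_k, θ_k, β_k), converge in Frobenius norm to some ω* ∈ Ω*. -/

import Mathlib

open Matrix

noncomputable section

/-- Frobenius inner product `⟨M, N⟩ = trace (Mᵀ N)`. -/
def finner {a b : ℕ} (M N : Matrix (Fin a) (Fin b) ℝ) : ℝ := (Mᵀ * N).trace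

/-- Frobenius norm. -/
def fnorm {a b : ℕ} (M : Matrix (Fin a) (Fin b) ℝ) : ℝ := Real.sqrt (finner M M)

/-- Entrywise positivity of a matrix. -/
def EntrywisePos {a b : ℕ} (M : Matrix (Fin a) (Fin b) ℝ) : Prop := ∀ i j, 0 < M i j

/-- Entrywise reciprocal of a matrix. -/
def recip {a b : ℕ} (M : Matrix (Fin a) (Fin b) ℝ) : Matrix (Fin a) (Fin b) ℝ :=
  Matrix.of fun i j => (M i j)⁻¹

/-- Convex subdifferential w.r.t. the Frobenius inner product. -/
def subdiff {a b : ℕ} (f : Matrix (Fin a) (Fin b) ℝ → ℝ) (x : Matrix (Fin a) (Fin b) ℝ) :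
    Set (Matrix (Fin a) (Fin b) ℝ) :=
  {u | ∀ y, f y ≥ f x + finner u (y - x)}

/-- Spectral norm (largest singular value), via the Euclidean operator characterization. -/
def specNorm {a b : ℕ} (M : Matrix (Fin a) (Fin b) ℝ) : ℝ :=
  sSup {r | ∃ x : Fin b → ℝ, (∑ i, x i ^ 2) = 1 ∧ r = Real.sqrt (∑ i, (M.mulVec x i) ^ 2)}

/-- Triples ω = (Z, E, Λ) (with Λ standing for −λ). -/
abbrev Triple (m d n : ℕ) :=
  Matrix (Fin d) (Fin n) ℝ × Matrix (Fin m) (Fin n) ℝ × Matrix (Fin m) (Fin n) ℝ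

/-- Blockwise Frobenius inner product on triples. -/
def tinner {m d n : ℕ} (ω ω' : Triple m d n) : ℝ :=
  finner ω.1 ω'.1 + finner ω.2.1 ω'.2.1 + finner ω.2.2 ω'.2.2

/-- Blockwise Frobenius norm on triples. -/
def tfnorm {m d n : ℕ} (ω : Triple m d n) : ℝ := Real.sqrt (tinner ω ω)

/-- The linear operator `D(Z) = θ∘Z − Wᵀ(β∘(AZ))`. -/
def Dop {m d n : ℕ} (A W : Matrix (Fin m) (Fin d) ℝ) (θ : Matrix (Fin d) (Fin n) ℝ)
    (β : Matrix (Fin m) (Fin n) ℝ) (Z : Matrix (Fin d) (Fin n) ℝ) : Matrix (Fin d) (Fin n) ℝ :=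
  Matrix.hadamard θ Z - Wᵀ * Matrix.hadamard β (A * Z)

/-- The block operator `H(Z,E,Λ) = (D(Z), β∘E, β⁻¹∘Λ)`. -/
def Hop {m d n : ℕ} (A W : Matrix (Fin m) (Fin d) ℝ) (θ : Matrix (Fin d) (Fin n) ℝ)
    (β : Matrix (Fin m) (Fin n) ℝ) (ω : Triple m d n) : Triple m d n :=
  (Dop A W θ β ω.1, Matrix.hadamard β ω.2.1, Matrix.hadamard (recip β) ω.2.2)

/-- `F(Z,E,−λ) = (Wᵀλ, λ, AZ+E−X)`. -/
def Fop {m d n : ℕ} (A : Matrix (Fin m) (Fin d) ℝ) (X : Matrix (Fin m) (Fin n) ℝ)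
    (W : Matrix (Fin m) (Fin d) ℝ) (ω : Triple m d n) : Triple m d n :=
  (Wᵀ * (-ω.2.2), -ω.2.2, A * ω.1 + ω.2.1 - X)

/-- `G(E') = (Wᵀ(β∘E'), β∘E', 0)`. -/
def Gop {m d n : ℕ} (W : Matrix (Fin m) (Fin d) ℝ) (β : Matrix (Fin m) (Fin n) ℝ)
    (E' : Matrix (Fin m) (Fin n) ℝ) : Triple m d n :=
  (Wᵀ * Matrix.hadamard β E', Matrix.hadamard β E', 0)

/-- The point `R = Z_k − θ⁻¹∘[Wᵀ(λ_k + β∘(AZ_k+E_k−X))]`. -/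
def Rmat {m d n : ℕ} (A : Matrix (Fin m) (Fin d) ℝ) (X : Matrix (Fin m) (Fin n) ℝ)
    (W : Matrix (Fin m) (Fin d) ℝ) (θ : Matrix (Fin d) (Fin n) ℝ) (β : Matrix (Fin m) (Fin n) ℝ)
    (Zk : Matrix (Fin d) (Fin n) ℝ) (Ek lk : Matrix (Fin m) (Fin n) ℝ) :
    Matrix (Fin d) (Fin n) ℝ :=
  Zk - Matrix.hadamard (recip θ) (Wᵀ * (lk + Matrix.hadamard β (A * Zk + Ek - X)))

/-- The point `S = X − AZ_{k+1} − β⁻¹∘λ_k`. -/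
def Smat {m d n : ℕ} (A : Matrix (Fin m) (Fin d) ℝ) (X : Matrix (Fin m) (Fin n) ℝ)
    (β : Matrix (Fin m) (Fin n) ℝ) (Zk1 : Matrix (Fin d) (Fin n) ℝ)
    (lk : Matrix (Fin m) (Fin n) ℝ) : Matrix (Fin m) (Fin n) ℝ :=
  X - A * Zk1 - Matrix.hadamard (recip β) lk

/-- One D-LADMM step with parameters (W, θ, β): `Z_{k+1}` minimizes
`f(Z) + (1/2)⟨θ∘(Z−R), Z−R⟩`, `E_{k+1}` minimizes `g(E) + (1/2)⟨β∘(E−S), E−S⟩`,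
and `λ_{k+1} = λ_k + β∘(AZ_{k+1}+E_{k+1}−X)`. -/
def DLADMMStep {m d n : ℕ} (f : Matrix (Fin d) (Fin n) ℝ → ℝ)
    (g : Matrix (Fin m) (Fin n) ℝ → ℝ) (A : Matrix (Fin m) (Fin d) ℝ)
    (X : Matrix (Fin m) (Fin n) ℝ) (W : Matrix (Fin m) (Fin d) ℝ)
    (θ : Matrix (Fin d) (Fin n) ℝ) (β : Matrix (Fin m) (Fin n) ℝ)
    (Zk : Matrix (Fin d) (Fin n) ℝ) (Ek lk : Matrix (Fin m) (Fin n) ℝ)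
    (Zk1 : Matrix (Fin d) (Fin n) ℝ) (Ek1 lk1 : Matrix (Fin m) (Fin n) ℝ) : Prop :=
  (∀ Z, f Zk1 + (1/2) * finner (Matrix.hadamard θ (Zk1 - Rmat A X W θ β Zk Ek lk))
        (Zk1 - Rmat A X W θ β Zk Ek lk)
      ≤ f Z + (1/2) * finner (Matrix.hadamard θ (Z - Rmat A X W θ β Zk Ek lk))
        (Z - Rmat A X W θ β Zk Ek lk)) ∧
  (∀ E, g Ek1 + (1/2) * finner (Matrix.hadamard β (Ek1 - Smat A X β Zk1 lk))
        (Ek1 - Smat A X β Zk1 lk)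
      ≤ g E + (1/2) * finner (Matrix.hadamard β (E - Smat A X β Zk1 lk))
        (E - Smat A X β Zk1 lk)) ∧
  lk1 = lk + Matrix.hadamard β (A * Zk1 + Ek1 - X)

/-- The KKT / solution set Ω* (stored as triples ω = (Z, E, −λ)). -/
def OmegaStar {m d n : ℕ} (f : Matrix (Fin d) (Fin n) ℝ → ℝ)
    (g : Matrix (Fin m) (Fin n) ℝ → ℝ) (A : Matrix (Fin m) (Fin d) ℝ)
    (X : Matrix (Fin m) (Fin n) ℝ) : Set (Triple m d n) :=
  {ω | Aᵀ * ω.2.2 ∈ subdiff f ω.1 ∧ ω.2.2 ∈ subdiff g ω.2.1 ∧ A * ω.1 + ω.2.1 = X}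

/-- The parameter set `S(σ, A)`. -/
def Sset {m d n : ℕ} (σ : ℝ) (A : Matrix (Fin m) (Fin d) ℝ) :
    Set (Matrix (Fin m) (Fin d) ℝ × Matrix (Fin d) (Fin n) ℝ × Matrix (Fin m) (Fin n) ℝ) :=
  {p | specNorm (p.1 - A) ≤ σ ∧ EntrywisePos p.2.1 ∧ EntrywisePos p.2.2 ∧
    ∀ Z : Matrix (Fin d) (Fin n) ℝ, Z ≠ 0 → 0 < finner (Dop A p.1 p.2.1 p.2.2 Z) Z}

/-- `dist²_H(ω, S)` where `H` is built from `(W, θ, β)`. -/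
def dist2H {m d n : ℕ} (A W : Matrix (Fin m) (Fin d) ℝ) (θ : Matrix (Fin d) (Fin n) ℝ)
    (β : Matrix (Fin m) (Fin n) ℝ) (ω : Triple m d n) (S : Set (Triple m d n)) : ℝ :=
  sInf {r | ∃ ωs ∈ S, r = tinner (ω - ωs) (Hop A W θ β (ω - ωs))}

/-- Frobenius distance of a triple to a set of triples. -/
def distF {m d n : ℕ} (ω : Triple m d n) (S : Set (Triple m d n)) : ℝ :=
  sInf {r | ∃ ωs ∈ S, r = tfnorm (ω - ωs)}


-- ===== auxiliary API =====
section API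
theorem finner_eq_sum {a b : ℕ} (M N : Matrix (Fin a) (Fin b) ℝ) :
    finner M N = ∑ i, ∑ j, M i j * N i j := by
  rw [finner, Matrix.trace]
  simp [Matrix.diag, Matrix.mul_apply, Matrix.transpose_apply]
  rw [Finset.sum_comm]

theorem finner_comm {a b : ℕ} (M N : Matrix (Fin a) (Fin b) ℝ) : finner M N = finner N M := by
  simp only [finner_eq_sum]; congr 1; ext i; congr 1; ext j; ring

theorem finner_add_left {a b : ℕ} (M M' N : Matrix (Fin a) (Fin b) ℝ) :
    finner (M + M') N = finner M N + finner M' N := by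
  simp [finner_eq_sum, Matrix.add_apply, add_mul, Finset.sum_add_distrib]

theorem finner_add_right {a b : ℕ} (M N N' : Matrix (Fin a) (Fin b) ℝ) :
    finner M (N + N') = finner M N + finner M N' := by
  rw [finner_comm, finner_add_left, finner_comm N M, finner_comm N' M]

theorem finner_sub_left {a b : ℕ} (M M' N : Matrix (Fin a) (Fin b) ℝ) :
    finner (M - M') N = finner M N - finner M' N := by
  simp [finner_eq_sum, Matrix.sub_apply, sub_mul, Finset.sum_sub_distrib]

theorem finner_sub_right {a b : ℕ} (M N N' : Matrix (Fin a) (Fin b) ℝ) :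
    finner M (N - N') = finner M N - finner M N' := by
  rw [finner_comm, finner_sub_left, finner_comm N M, finner_comm N' M]

theorem finner_smul_left {a b : ℕ} (c : ℝ) (M N : Matrix (Fin a) (Fin b) ℝ) :
    finner (c • M) N = c * finner M N := by
  simp [finner_eq_sum, Finset.mul_sum, mul_assoc]

theorem finner_smul_right {a b : ℕ} (c : ℝ) (M N : Matrix (Fin a) (Fin b) ℝ) :
    finner M (c • N) = c * finner M N := by
  rw [finner_comm, finner_smul_left, finner_comm N M]

theorem finner_neg_left {a b : ℕ} (M N : Matrix (Fin a) (Fin b) ℝ) :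
    finner (-M) N = - finner M N := by
  simp [finner_eq_sum, Finset.sum_neg_distrib]

theorem finner_self_nonneg {a b : ℕ} (M : Matrix (Fin a) (Fin b) ℝ) : 0 ≤ finner M M := by
  rw [finner_eq_sum]
  apply Finset.sum_nonneg; intro i _; apply Finset.sum_nonneg; intro j _; exact mul_self_nonneg _

theorem finner_self_pos {a b : ℕ} (M : Matrix (Fin a) (Fin b) ℝ) (h : M ≠ 0) :
    0 < finner M M := by
  rcases lt_or_eq_of_le (finner_self_nonneg M) with h' | h'
  · exact h'
  exfalso; apply h
  ext i j
  have hnn : ∀ p ∈ Finset.univ (α := Fin a), (0:ℝ) ≤ ∑ j, M p j * M p j := by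
    intro p _; apply Finset.sum_nonneg; intro q _; exact mul_self_nonneg _
  have h1 : ∀ p ∈ Finset.univ (α := Fin a), (∑ j, M p j * M p j) = 0 := by
    have := (Finset.sum_eq_zero_iff_of_nonneg hnn).mp (by rw [← finner_eq_sum]; exact h'.symm)
    exact this
  have h2 := (Finset.sum_eq_zero_iff_of_nonneg (by intro q _; exact mul_self_nonneg (M i q))).mp
    (h1 i (Finset.mem_univ i)) j (Finset.mem_univ j)
  have := mul_self_eq_zero.mp h2
  simpa using this

theorem finner_transpose_mul {a b c : ℕ} (B : Matrix (Fin a) (Fin b) ℝ)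
    (P : Matrix (Fin a) (Fin c) ℝ) (Q : Matrix (Fin b) (Fin c) ℝ) :
    finner (Bᵀ * P) Q = finner P (B * Q) := by
  unfold finner
  rw [Matrix.transpose_mul, Matrix.transpose_transpose, Matrix.mul_assoc]

theorem finner_entry_sq_le {a b : ℕ} (M : Matrix (Fin a) (Fin b) ℝ) (i : Fin a) (j : Fin b) :
    M i j ^ 2 ≤ finner M M := by
  rw [finner_eq_sum]
  have h1 : M i j ^ 2 ≤ ∑ q, M i q * M i q := by
    have := Finset.single_le_sum (f := fun q => M i q * M i q)
      (fun q _ => mul_self_nonneg _) (Finset.mem_univ j)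
    simpa [pow_two] using this
  calc M i j ^2 ≤ ∑ q, M i q * M i q := h1
    _ ≤ ∑ p, ∑ q, M p q * M p q := Finset.single_le_sum (f := fun p => ∑ q, M p q * M p q)
        (fun p _ => Finset.sum_nonneg fun q _ => mul_self_nonneg _) (Finset.mem_univ i)

/-- Cauchy–Schwarz bound: ‖AZ‖² ≤ ‖A‖²‖Z‖². -/
theorem finner_mul_self_le {a b c : ℕ} (A : Matrix (Fin a) (Fin b) ℝ)
    (Z : Matrix (Fin b) (Fin c) ℝ) :
    finner (A * Z) (A * Z) ≤ finner A A * finner Z Z := by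
  simp only [finner_eq_sum]
  have key : ∀ i k, (A * Z) i k * (A * Z) i k ≤ (∑ j, A i j * A i j) * (∑ j, Z j k * Z j k) := by
    intro i k
    rw [Matrix.mul_apply]
    have hcs := Finset.sum_mul_sq_le_sq_mul_sq Finset.univ (fun j => A i j) (fun j => Z j k)
    calc (∑ j, A i j * Z j k) * (∑ j, A i j * Z j k) = (∑ j, A i j * Z j k)^2 := by ring
      _ ≤ (∑ j, (A i j)^2) * (∑ j, (Z j k)^2) := hcs
      _ = (∑ j, A i j * A i j) * (∑ j, Z j k * Z j k) := by
          simp [pow_two]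
  calc (∑ i, ∑ k, (A * Z) i k * (A * Z) i k)
      ≤ ∑ i, ∑ k, (∑ j, A i j * A i j) * (∑ j, Z j k * Z j k) := by
        apply Finset.sum_le_sum; intro i _; apply Finset.sum_le_sum; intro k _; exact key i k
    _ = (∑ i, ∑ j, A i j * A i j) * (∑ j, ∑ k, Z j k * Z j k) := by
        rw [Finset.sum_mul]
        congr 1; ext i
        rw [← Finset.mul_sum, Finset.sum_comm]

end API

section AUX
open Finset

/-- constant matrix -/
def constm {a b : ℕ} (c : ℝ) : Matrix (Fin a) (Fin b) ℝ := Matrix.of fun _ _ => c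

theorem hadamard_constm {a b : ℕ} (c : ℝ) (M : Matrix (Fin a) (Fin b) ℝ) :
    Matrix.hadamard (constm c) M = c • M := by
  ext i j; simp [constm, Matrix.hadamard]

theorem entrywisePos_constm {a b : ℕ} {c : ℝ} (hc : 0 < c) :
    EntrywisePos (constm (a := a) (b := b) c) := fun _ _ => hc

theorem specNorm_zero {a b : ℕ} [NeZero b] : specNorm (0 : Matrix (Fin a) (Fin b) ℝ) = 0 := by
  have : {r | ∃ x : Fin b → ℝ, (∑ i, x i ^ 2) = 1 ∧
      r = Real.sqrt (∑ i, ((0 : Matrix (Fin a) (Fin b) ℝ).mulVec x i) ^ 2)} = {0} := by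
    ext r
    constructor
    · rintro ⟨x, hx, rfl⟩
      simp [Matrix.zero_mulVec]
    · rintro rfl
      refine ⟨Pi.single 0 1, ?_, ?_⟩
      · rw [Finset.sum_eq_single 0]
        · simp
        · intro i _ hi; simp [Pi.single_apply, hi]
        · simp
      · simp [Matrix.zero_mulVec]
  rw [specNorm, this, csSup_singleton]

theorem mem_Sset_main {m d n : ℕ} [NeZero d] (A : Matrix (Fin m) (Fin d) ℝ) :
    (A, constm (1 + finner A A), constm 1) ∈ Sset (m := m) (d := d) (n := n) 0 A := by
  refine ⟨?_, entrywisePos_constm (by nlinarith [finner_self_nonneg A]),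
    entrywisePos_constm one_pos, ?_⟩
  · rw [sub_self, specNorm_zero]
  · intro Z hZ
    have h1 : Dop A A (constm (1 + finner A A)) (constm 1) Z
        = (1 + finner A A) • Z - Aᵀ * (A * Z) := by
      rw [Dop, hadamard_constm, hadamard_constm, one_smul]
    rw [h1, finner_sub_left, finner_smul_left, finner_transpose_mul]
    have h2 := finner_mul_self_le A Z
    have h3 := finner_self_pos Z hZ
    nlinarith [finner_mul_self_le A Z, finner_self_pos Z hZ]

end AUX


section MIN
open Metric Set

attribute [local instance] Matrix.normedAddCommGroup Matrix.normedSpace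

theorem recip_constm {a b : ℕ} (c : ℝ) :
    recip (constm (a := a) (b := b) c) = constm c⁻¹ := by
  ext i j; simp [recip, constm]

theorem finner_zero_left {a b : ℕ} (N : Matrix (Fin a) (Fin b) ℝ) : finner 0 N = 0 := by
  simp [finner_eq_sum]

theorem finner_zero_right {a b : ℕ} (N : Matrix (Fin a) (Fin b) ℝ) : finner N 0 = 0 := by
  simp [finner_eq_sum]

theorem abs_entry_le_sqrt {a b : ℕ} (M : Matrix (Fin a) (Fin b) ℝ) (i : Fin a) (j : Fin b) :
    |M i j| ≤ Real.sqrt (finner M M) := by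
  rw [← Real.sqrt_sq_eq_abs]
  exact Real.sqrt_le_sqrt (finner_entry_sq_le M i j)

theorem matrix_norm_le_sqrt_finner {a b : ℕ} (M : Matrix (Fin a) (Fin b) ℝ) :
    ‖M‖ ≤ Real.sqrt (finner M M) := by
  rw [Matrix.norm_le_iff (Real.sqrt_nonneg _)]
  intro i j
  rw [Real.norm_eq_abs]
  exact abs_entry_le_sqrt M i j

theorem norm_sq_le_finner {a b : ℕ} (M : Matrix (Fin a) (Fin b) ℝ) :
    ‖M‖ ^ 2 ≤ finner M M := by
  have h := matrix_norm_le_sqrt_finner M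
  have h2 : ‖M‖ ^2 ≤ Real.sqrt (finner M M) ^ 2 := by
    apply pow_le_pow_left₀ (norm_nonneg M) h 2
  rwa [Real.sq_sqrt (finner_self_nonneg M)] at h2

theorem entry_continuous {a b : ℕ} (i : Fin a) (j : Fin b) :
    Continuous (fun M : Matrix (Fin a) (Fin b) ℝ => M i j) := by
  have : LipschitzWith 1 (fun M : Matrix (Fin a) (Fin b) ℝ => M i j) := by
    apply LipschitzWith.of_dist_le_mul
    intro M N
    simp only [dist_eq_norm, NNReal.coe_one, one_mul]
    simpa [Matrix.sub_apply] using
      Matrix.norm_entry_le_entrywise_sup_norm (M - N) (i := i) (j := j)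
  exact this.continuous

theorem finner_continuous {a b : ℕ} {X : Type*} [TopologicalSpace X]
    {F : X → Matrix (Fin a) (Fin b) ℝ} {G : X → Matrix (Fin a) (Fin b) ℝ}
    (hF : ∀ i j, Continuous fun x => F x i j) (hG : ∀ i j, Continuous fun x => G x i j) :
    Continuous (fun x => finner (F x) (G x)) := by
  simp only [finner_eq_sum]
  apply continuous_finset_sum; intro i _
  apply continuous_finset_sum; intro j _
  exact (hF i j).mul (hG i j)

theorem convexOn_continuous {a b : ℕ} (f : Matrix (Fin a) (Fin b) ℝ → ℝ)
    (hf : ConvexOn ℝ Set.univ f) : Continuous f := by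
  rw [← continuousOn_univ]
  exact hf.continuousOn isOpen_univ

/-- Existence of the proximal minimizer. -/
theorem exists_prox_min {a b : ℕ} (f : Matrix (Fin a) (Fin b) ℝ → ℝ)
    (hf : ConvexOn ℝ Set.univ f) (τ : ℝ) (hτ : 0 < τ) (R : Matrix (Fin a) (Fin b) ℝ) :
    ∃ Z1, ∀ Y, f Z1 + (1/2) * finner (Matrix.hadamard (constm τ) (Z1 - R)) (Z1 - R)
      ≤ f Y + (1/2) * finner (Matrix.hadamard (constm τ) (Y - R)) (Y - R) := by
  have hfc : Continuous f := convexOn_continuous f hf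
  set p : Matrix (Fin a) (Fin b) ℝ → ℝ :=
    fun Y => f Y + (1/2) * finner (Matrix.hadamard (constm τ) (Y - R)) (Y - R) with hp
  have hpY : ∀ Y, p Y = f Y + τ/2 * finner (Y - R) (Y - R) := by
    intro Y; rw [hp]; simp only [hadamard_constm, finner_smul_left]; ring
  have hpc : Continuous p := by
    apply hfc.add
    apply Continuous.mul continuous_const
    apply finner_continuous
    · intro i j
      have : Continuous (fun Y : Matrix (Fin a) (Fin b) ℝ => Y i j - R i j) :=
        (entry_continuous i j).sub continuous_const
      simpa [Matrix.hadamard, constm, mul_sub, Matrix.sub_apply] using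
        (show Continuous fun Y : Matrix (Fin a) (Fin b) ℝ => τ * (Y i j - R i j) from continuous_const.mul this)
    · intro i j
      exact (entry_continuous i j).sub continuous_const
  -- max of f R - f on closed ball radius 1
  obtain ⟨YK, hYKmem, hYK⟩ := (isCompact_closedBall R 1).exists_isMaxOn
    ⟨R, by simp⟩ ((continuous_const.sub hfc).continuousOn)
  set K := f R - f YK with hKdef
  have hK0 : 0 ≤ K := by
    have h' : f R - f R ≤ f R - f YK := hYK (mem_closedBall_self zero_le_one)
    simp only [hKdef]; linarith
  -- linear lower bound
  have hlow : ∀ Y : Matrix (Fin a) (Fin b) ℝ, 1 ≤ ‖Y - R‖ → f R - ‖Y - R‖ * K ≤ f Y := by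
    intro Y hY
    set u := ‖Y - R‖ with hu
    have hu0 : 0 < u := lt_of_lt_of_le one_pos hY
    have hY' : R + u⁻¹ • (Y - R) ∈ closedBall R 1 := by
      rw [mem_closedBall, dist_eq_norm]
      have : R + u⁻¹ • (Y - R) - R = u⁻¹ • (Y - R) := by abel
      rw [this, norm_smul, Real.norm_eq_abs, abs_of_pos (inv_pos.mpr hu0), ← hu,
        inv_mul_cancel₀ (ne_of_gt hu0)]
    have hcomb : R + u⁻¹ • (Y - R) = (1 - u⁻¹) • R + u⁻¹ • Y := by
      rw [smul_sub, sub_smul, one_smul]; abel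
    have hconv := hf.2 (mem_univ R) (mem_univ Y)
      (by have h1 : u⁻¹ * u = 1 := inv_mul_cancel₀ (ne_of_gt hu0); nlinarith : (0:ℝ) ≤ 1 - u⁻¹) (le_of_lt (inv_pos.mpr hu0)) (by ring)
    simp only [smul_eq_mul] at hconv
    have hball : f R - f (R + u⁻¹ • (Y - R)) ≤ f R - f YK := hYK hY'
    rw [hcomb] at hball
    have h2 : f R - K ≤ (1 - u⁻¹) * f R + u⁻¹ * f Y := by
      have h3 : f R - K ≤ f ((1 - u⁻¹) • R + u⁻¹ • Y) := by
        simp only [hKdef]; linarith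
      linarith [le_trans h3 hconv]
    have hne : u ≠ 0 := ne_of_gt hu0
    have key : u * ((1 - u⁻¹) * f R + u⁻¹ * f Y) = u * f R - f R + f Y := by
      field_simp
    have hmul := mul_le_mul_of_nonneg_left h2 (le_of_lt hu0)
    rw [key] at hmul
    have hexp : u * (f R - K) = u * f R - u * K := by ring
    linarith [hmul, hexp.le, hexp.ge]
  -- minimize over a large closed ball
  set ρ : ℝ := 1 + max 1 (2*K/τ) with hρ
  have hρ1 : (1:ℝ) ≤ max 1 (2*K/τ) := le_max_left _ _
  have hρpos : 0 < ρ := by rw [hρ]; linarith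
  obtain ⟨x, hxmem, hxmin⟩ := (isCompact_closedBall R ρ).exists_isMinOn
    ⟨R, mem_closedBall_self hρpos.le⟩ hpc.continuousOn
  refine ⟨x, fun Y => ?_⟩
  show p x ≤ p Y
  by_cases hY : Y ∈ closedBall R ρ
  · exact hxmin hY
  · have h1 : p x ≤ p R := hxmin (mem_closedBall_self hρpos.le)
    have hpR : p R = f R := by
      rw [hpY, sub_self]
      simp [finner_zero_left]
    have hnorm : ρ ≤ ‖Y - R‖ := by
      rw [mem_closedBall, dist_eq_norm] at hY
      linarith [lt_of_not_ge hY]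
    have h1le : (1:ℝ) ≤ ‖Y - R‖ := by rw [hρ] at hnorm; linarith
    have hlowY := hlow Y h1le
    have hq : ‖Y - R‖^2 ≤ finner (Y - R) (Y - R) := norm_sq_le_finner _
    have hfin : f R ≤ p Y := by
      rw [hpY]
      set u := ‖Y - R‖ with hu
      have hKu : 2*K/τ ≤ u := by
        have := le_max_right (1:ℝ) (2*K/τ); rw [hρ] at hnorm; linarith
      have h2K : 2*K ≤ u * τ := by rwa [div_le_iff₀ hτ] at hKu
      have h3 : u * K ≤ τ/2 * u^2 := by
        nlinarith [mul_le_mul_of_nonneg_left h2K (by linarith : (0:ℝ) ≤ u)]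
      have h4 : τ/2 * u^2 ≤ τ/2 * finner (Y - R) (Y - R) :=
        mul_le_mul_of_nonneg_left hq (by positivity)
      calc f R ≤ f Y + u*K := by linarith
        _ ≤ f Y + τ/2*u^2 := by linarith
        _ ≤ f Y + τ/2 * finner (Y - R) (Y - R) := by linarith
    linarith [h1, hpR, hfin]
end MIN

section SUB
open Set

theorem finner_neg_right {a b : ℕ} (M N : Matrix (Fin a) (Fin b) ℝ) :
    finner M (-N) = - finner M N := by
  rw [finner_comm, finner_neg_left, finner_comm]

theorem finner_add_add {a b : ℕ} (x y : Matrix (Fin a) (Fin b) ℝ) :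
    finner (x + y) (x + y) = finner x x + 2 * finner y x + finner y y := by
  rw [finner_add_left, finner_add_right, finner_add_right, finner_comm x y]; ring

/-- Extraction of a subgradient from the proximal minimization property. -/
theorem subdiff_of_prox_min {a b : ℕ} (f : Matrix (Fin a) (Fin b) ℝ → ℝ)
    (hf : ConvexOn ℝ Set.univ f) (τ : ℝ) (hτ : 0 < τ) (R Z1 : Matrix (Fin a) (Fin b) ℝ)
    (h : ∀ Y, f Z1 + (1/2) * finner (Matrix.hadamard (constm τ) (Z1 - R)) (Z1 - R)
      ≤ f Y + (1/2) * finner (Matrix.hadamard (constm τ) (Y - R)) (Y - R)) :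
    (τ • (R - Z1)) ∈ subdiff f Z1 := by
  intro Y
  set a0 : ℝ := finner (Z1 - R) (Y - Z1) with ha0
  set b0 : ℝ := finner (Y - Z1) (Y - Z1) with hb0
  have hb0nn : 0 ≤ b0 := finner_self_nonneg _
  have hgoal : finner (τ • (R - Z1)) (Y - Z1) = - (τ * a0) := by
    rw [finner_smul_left, ha0]
    have : finner (R - Z1) (Y - Z1) = - finner (Z1 - R) (Y - Z1) := by
      have : R - Z1 = -(Z1 - R) := by abel
      rw [this, finner_neg_left]
    rw [this]; ring
  rw [hgoal]
  -- key estimate for every s ∈ (0,1]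
  have hs : ∀ s : ℝ, 0 < s → s ≤ 1 → f Z1 ≤ f Y + τ * a0 + τ * s * b0 / 2 := by
    intro s hs0 hs1
    have hYs := h (Z1 + s • (Y - Z1))
    have hcomb : Z1 + s • (Y - Z1) = (1 - s) • Z1 + s • Y := by
      rw [smul_sub, sub_smul, one_smul]; abel
    have hconv : f ((1 - s) • Z1 + s • Y) ≤ (1 - s) * f Z1 + s * f Y := by
      have := hf.2 (mem_univ Z1) (mem_univ Y) (show (0:ℝ) ≤ 1 - s by linarith)
        (show (0:ℝ) ≤ s by linarith) (show (1 - s) + s = 1 by ring)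
      simpa [smul_eq_mul] using this
    rw [hcomb] at hYs
    have hquad : finner (Matrix.hadamard (constm τ) ((1 - s) • Z1 + s • Y - R))
        ((1 - s) • Z1 + s • Y - R)
        = τ * (finner (Z1 - R) (Z1 - R) + 2 * s * a0 + s^2 * b0) := by
      rw [hadamard_constm, finner_smul_left]
      have hpt : (1 - s) • Z1 + s • Y - R = (Z1 - R) + s • (Y - Z1) := by
        rw [smul_sub, sub_smul, one_smul]; abel
      rw [hpt, finner_add_add, finner_smul_left, finner_smul_right, finner_smul_left,
        finner_comm (Y - Z1) (Z1 - R), ← ha0, ← hb0]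
      ring
    have hquad1 : finner (Matrix.hadamard (constm τ) (Z1 - R)) (Z1 - R)
        = τ * finner (Z1 - R) (Z1 - R) := by
      rw [hadamard_constm, finner_smul_left]
    rw [hquad, hquad1] at hYs
    have hcv : f ((1 - s) • Z1 + s • Y) ≤ (1 - s) * f Z1 + s * f Y := hconv
    have hkey : s * f Z1 ≤ s * f Y + τ * s * a0 + τ * s^2 * b0 / 2 := by nlinarith
    have hmul := mul_le_mul_of_nonneg_left hkey (le_of_lt (inv_pos.mpr hs0))
    have hsne : s ≠ 0 := ne_of_gt hs0
    have e1 : s⁻¹ * (s * f Z1) = f Z1 := by field_simp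
    have e2 : s⁻¹ * (s * f Y + τ * s * a0 + τ * s^2 * b0 / 2)
        = f Y + τ * a0 + τ * s * b0 / 2 := by field_simp
    rw [e1, e2] at hmul
    exact hmul
  -- pass to the limit s → 0 by choosing s small
  by_contra hcon
  push_neg at hcon
  set ε : ℝ := f Z1 + -(τ * a0) - f Y with hε
  have hεpos : 0 < ε := by rw [hε]; linarith [hcon]
  set s : ℝ := min 1 (ε / (τ * (b0 + 1))) with hsdef
  have hden : 0 < τ * (b0 + 1) := by nlinarith
  have hs0 : 0 < s := lt_min one_pos (div_pos hεpos hden)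
  have hs1 : s ≤ 1 := min_le_left _ _
  have hkey := hs s hs0 hs1
  have hsmall : τ * s * b0 / 2 < ε := by
    have h1 : s ≤ ε / (τ * (b0 + 1)) := min_le_right _ _
    have h2 : τ * s * b0 ≤ τ * (ε / (τ * (b0 + 1))) * b0 := by
      apply mul_le_mul_of_nonneg_right _ hb0nn
      exact mul_le_mul_of_nonneg_left h1 (le_of_lt hτ)
    have h3 : τ * (ε / (τ * (b0 + 1))) * b0 < ε := by
      have he : τ * (ε / (τ * (b0 + 1))) * b0 = ε * (τ * b0) / (τ * (b0 + 1)) := by ring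
      rw [he, div_lt_iff₀ hden]
      nlinarith [mul_pos hεpos hτ]
    nlinarith
  linarith [hkey, hsmall]
end SUB

section STEP
open Set

theorem subdiff_mono {a b : ℕ} {f : Matrix (Fin a) (Fin b) ℝ → ℝ}
    {u v x y : Matrix (Fin a) (Fin b) ℝ}
    (hu : u ∈ subdiff f x) (hv : v ∈ subdiff f y) : 0 ≤ finner (u - v) (x - y) := by
  have h1 := hu y
  have h2 := hv x
  have e1 : finner u (y - x) = - finner u (x - y) := by
    have hyx : y - x = -(x - y) := by abel
    rw [hyx, finner_neg_right]
  rw [e1] at h1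
  rw [finner_sub_left]
  linarith

theorem step_subgrads {m d n : ℕ} {f : Matrix (Fin d) (Fin n) ℝ → ℝ}
    {g : Matrix (Fin m) (Fin n) ℝ → ℝ} (hf : ConvexOn ℝ Set.univ f) (hg : ConvexOn ℝ Set.univ g)
    {A : Matrix (Fin m) (Fin d) ℝ} {X : Matrix (Fin m) (Fin n) ℝ} {τ : ℝ} (hτ : 0 < τ)
    {Zk Z1 : Matrix (Fin d) (Fin n) ℝ} {Ek lk E1 l1 : Matrix (Fin m) (Fin n) ℝ}
    (hs : DLADMMStep f g A X A (constm τ) (constm 1) Zk Ek lk Z1 E1 l1) :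
    (τ • (Zk - Z1) + Aᵀ * ((-lk) - (A * Zk + Ek - X))) ∈ subdiff f Z1 ∧
    (-l1) ∈ subdiff g E1 ∧
    (-l1 : Matrix (Fin m) (Fin n) ℝ) = (-lk) - (A * Z1 + E1 - X) := by
  obtain ⟨h1, h2, h3⟩ := hs
  have hR := subdiff_of_prox_min f hf τ hτ _ Z1 h1
  have hS := subdiff_of_prox_min g hg 1 one_pos _ E1 h2
  have hRm : Rmat A X A (constm τ) (constm 1) Zk Ek lk
      = Zk - τ⁻¹ • (Aᵀ * (lk + (A * Zk + Ek - X))) := by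
    rw [Rmat, recip_constm, hadamard_constm, hadamard_constm, one_smul]
  have hRe : τ • (Rmat A X A (constm τ) (constm 1) Zk Ek lk - Z1)
      = τ • (Zk - Z1) + Aᵀ * ((-lk) - (A * Zk + Ek - X)) := by
    rw [hRm]
    have hA : Aᵀ * ((-lk) - (A * Zk + Ek - X)) = -(Aᵀ * (lk + (A * Zk + Ek - X))) := by
      rw [← Matrix.mul_neg]; congr 1; abel
    rw [hA, smul_sub, smul_sub, smul_sub, smul_smul, mul_inv_cancel₀ (ne_of_gt hτ), one_smul]
    abel
  have hSm : Smat A X (constm 1) Z1 lk = X - A * Z1 - lk := by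
    rw [Smat, recip_constm, inv_one, hadamard_constm, one_smul]
  have h3' : l1 = lk + (A * Z1 + E1 - X) := by rw [h3, hadamard_constm, one_smul]
  have hSe : (1:ℝ) • (Smat A X (constm 1) Z1 lk - E1) = -l1 := by
    rw [one_smul, hSm, h3']; abel
  refine ⟨hRe ▸ hR, hSe ▸ hS, ?_⟩
  rw [h3']; abel

theorem onestep {m d n : ℕ} {f : Matrix (Fin d) (Fin n) ℝ → ℝ} {g : Matrix (Fin m) (Fin n) ℝ → ℝ}
    {A : Matrix (Fin m) (Fin d) ℝ} {X : Matrix (Fin m) (Fin n) ℝ}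
    (τ : ℝ) (hτeq : τ = 1 + finner A A)
    (Zk Z1 Zs : Matrix (Fin d) (Fin n) ℝ) (Ek E1 Es Lk L1 Ls : Matrix (Fin m) (Fin n) ℝ)
    (hp : (τ • (Zk - Z1) + Aᵀ * (Lk - (A * Zk + Ek - X))) ∈ subdiff f Z1)
    (hq : L1 ∈ subdiff g E1) (hqk : Lk ∈ subdiff g Ek)
    (hL : L1 = Lk - (A * Z1 + E1 - X))
    (hs1 : Aᵀ * Ls ∈ subdiff f Zs) (hs2 : Ls ∈ subdiff g Es) (hs3 : A * Zs + Es = X) :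
    (τ * finner (Z1 - Zs) (Z1 - Zs) - finner (A * (Z1 - Zs)) (A * (Z1 - Zs))
      + finner (E1 - Es) (E1 - Es) + finner (L1 - Ls) (L1 - Ls))
    + (finner (Zk - Z1) (Zk - Z1) + finner (Ek - E1) (Ek - E1) + finner (Lk - L1) (Lk - L1))
    ≤ τ * finner (Zk - Zs) (Zk - Zs) - finner (A * (Zk - Zs)) (A * (Zk - Zs))
      + finner (Ek - Es) (Ek - Es) + finner (Lk - Ls) (Lk - Ls) := by
  have hid : (τ • (Zk - Z1) + Aᵀ * (Lk - (A * Zk + Ek - X))) - Aᵀ * Ls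
      = τ • (Zk - Z1) + Aᵀ * ((L1 - Ls) - A * (Zk - Z1) - (Ek - E1)) := by
    rw [add_sub_assoc, ← Matrix.mul_sub]
    congr 2
    rw [hL, Matrix.mul_sub]
    abel
  have m1 : (0:ℝ) ≤ τ * finner (Zk - Z1) (Z1 - Zs)
      + (finner (L1 - Ls) (A * (Z1 - Zs)) - finner (A * (Zk - Z1)) (A * (Z1 - Zs))
        - finner (Ek - E1) (A * (Z1 - Zs))) := by
    have h := subdiff_mono hp hs1
    rw [hid] at h
    rwa [finner_add_left, finner_smul_left, finner_transpose_mul,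
      finner_sub_left (L1 - Ls - A * (Zk - Z1)) (Ek - E1) (A * (Z1 - Zs)),
      finner_sub_left (L1 - Ls) (A * (Zk - Z1)) (A * (Z1 - Zs))] at h
  have m2 : (0:ℝ) ≤ finner (L1 - Ls) (E1 - Es) := subdiff_mono hq hs2
  have m3 : (0:ℝ) ≤ finner (Lk - L1) (Ek - E1) := subdiff_mono hqk hq
  have hAze : A * (Z1 - Zs) + (E1 - Es) = Lk - L1 := by
    have h1 : A * Z1 + E1 - X = Lk - L1 := by rw [hL]; abel
    rw [Matrix.mul_sub, ← h1, ← hs3]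
    abel
  have hzdec : Zk - Zs = (Z1 - Zs) + (Zk - Z1) := by abel
  have hedec : Ek - Es = (E1 - Es) + (Ek - E1) := by abel
  have hldec : Lk - Ls = (L1 - Ls) + (Lk - L1) := by abel
  have E1' : finner (Zk - Zs) (Zk - Zs) = finner (Z1 - Zs) (Z1 - Zs)
      + 2 * finner (Zk - Z1) (Z1 - Zs) + finner (Zk - Z1) (Zk - Z1) := by
    rw [hzdec, finner_add_add]
  have E2' : finner (A * (Zk - Zs)) (A * (Zk - Zs)) = finner (A * (Z1 - Zs)) (A * (Z1 - Zs))
      + 2 * finner (A * (Zk - Z1)) (A * (Z1 - Zs)) + finner (A * (Zk - Z1)) (A * (Zk - Z1)) := by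
    have hAdec : A * (Zk - Zs) = A * (Z1 - Zs) + A * (Zk - Z1) := by
      rw [← Matrix.mul_add, ← hzdec]
    rw [hAdec, finner_add_add]
  have E3' : finner (Ek - Es) (Ek - Es) = finner (E1 - Es) (E1 - Es)
      + 2 * finner (Ek - E1) (E1 - Es) + finner (Ek - E1) (Ek - E1) := by
    rw [hedec, finner_add_add]
  have E4' : finner (Lk - Ls) (Lk - Ls) = finner (L1 - Ls) (L1 - Ls)
      + 2 * finner (Lk - L1) (L1 - Ls) + finner (Lk - L1) (Lk - L1) := by
    rw [hldec, finner_add_add]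
  have CS : finner (A * (Zk - Z1)) (A * (Zk - Z1)) ≤ finner A A * finner (Zk - Z1) (Zk - Z1) :=
    finner_mul_self_le A (Zk - Z1)
  have X1 : finner (Lk - L1) (L1 - Ls)
      = finner (A * (Z1 - Zs)) (L1 - Ls) + finner (E1 - Es) (L1 - Ls) := by
    rw [← hAze, finner_add_left]
  have X2 : finner (Ek - E1) (A * (Z1 - Zs)) + finner (Ek - E1) (E1 - Es)
      = finner (Ek - E1) (Lk - L1) := by
    rw [← finner_add_right, hAze]
  have C1 : finner (L1 - Ls) (A * (Z1 - Zs)) = finner (A * (Z1 - Zs)) (L1 - Ls) :=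
    finner_comm _ _
  have C2 : finner (Ek - E1) (Lk - L1) = finner (Lk - L1) (Ek - E1) := finner_comm _ _
  have C3 : finner (E1 - Es) (L1 - Ls) = finner (L1 - Ls) (E1 - Es) := finner_comm _ _
  have E1t : τ * finner (Zk - Zs) (Zk - Zs) = τ * finner (Z1 - Zs) (Z1 - Zs)
      + 2 * (τ * finner (Zk - Z1) (Z1 - Zs)) + τ * finner (Zk - Z1) (Zk - Z1) := by
    rw [E1']; ring
  subst hτeq
  linarith [m1, m2, m3, E1t, E2', E3', E4', CS, X1, X2, C1, C2, C3]
end STEP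

section HELP
open Set Filter Metric

attribute [local instance] Matrix.normedAddCommGroup Matrix.normedSpace

/-- The quadratic form of the `H`-metric. -/
def Qq {m d n : ℕ} (A : Matrix (Fin m) (Fin d) ℝ) (τ : ℝ) (z : Matrix (Fin d) (Fin n) ℝ)
    (e l : Matrix (Fin m) (Fin n) ℝ) : ℝ :=
  τ * finner z z - finner (A * z) (A * z) + finner e e + finner l l

theorem Qq_lower {m d n : ℕ} (A : Matrix (Fin m) (Fin d) ℝ) {τ : ℝ} (hτ : τ = 1 + finner A A)
    (z : Matrix (Fin d) (Fin n) ℝ) (e l : Matrix (Fin m) (Fin n) ℝ) :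
    finner z z + finner e e + finner l l ≤ Qq A τ z e l := by
  rw [Qq, hτ]
  nlinarith [finner_mul_self_le A z]

theorem Qq_nonneg {m d n : ℕ} (A : Matrix (Fin m) (Fin d) ℝ) {τ : ℝ} (hτ : τ = 1 + finner A A)
    (z : Matrix (Fin d) (Fin n) ℝ) (e l : Matrix (Fin m) (Fin n) ℝ) : 0 ≤ Qq A τ z e l := by
  have h := Qq_lower A hτ z e l
  linarith [finner_self_nonneg z, finner_self_nonneg e, finner_self_nonneg l]

theorem tinner_self_nonneg {m d n : ℕ} (u : Triple m d n) : 0 ≤ tinner u u := by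
  rw [tinner]
  linarith [finner_self_nonneg u.1, finner_self_nonneg u.2.1, finner_self_nonneg u.2.2]

theorem triple_norm_le {m d n : ℕ} (u : Triple m d n) : ‖u‖ ≤ Real.sqrt (tinner u u) := by
  have h1 : finner u.1 u.1 ≤ tinner u u := by
    have := finner_self_nonneg u.2.1; have := finner_self_nonneg u.2.2
    rw [tinner]; linarith
  have h2 : finner u.2.1 u.2.1 ≤ tinner u u := by
    have := finner_self_nonneg u.1; have := finner_self_nonneg u.2.2
    rw [tinner]; linarith
  have h3 : finner u.2.2 u.2.2 ≤ tinner u u := by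
    have := finner_self_nonneg u.1; have := finner_self_nonneg u.2.1
    rw [tinner]; linarith
  have g1 : ‖u.1‖ ≤ Real.sqrt (tinner u u) :=
    le_trans (matrix_norm_le_sqrt_finner u.1) (Real.sqrt_le_sqrt h1)
  have g2 : ‖u.2.1‖ ≤ Real.sqrt (tinner u u) :=
    le_trans (matrix_norm_le_sqrt_finner u.2.1) (Real.sqrt_le_sqrt h2)
  have g3 : ‖u.2.2‖ ≤ Real.sqrt (tinner u u) :=
    le_trans (matrix_norm_le_sqrt_finner u.2.2) (Real.sqrt_le_sqrt h3)
  calc ‖u‖ = max ‖u.1‖ (max ‖u.2.1‖ ‖u.2.2‖) := rfl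
    _ ≤ Real.sqrt (tinner u u) := max_le g1 (max_le g2 g3)

section CONT
variable {X : Type*} [TopologicalSpace X] {a b c : ℕ}

theorem EC_const (C : Matrix (Fin a) (Fin b) ℝ) :
    ∀ (i : Fin a) (j : Fin b), Continuous fun _ : X => C i j := fun _ _ => continuous_const

theorem EC_sub {F G : X → Matrix (Fin a) (Fin b) ℝ}
    (hF : ∀ i j, Continuous fun x => F x i j) (hG : ∀ i j, Continuous fun x => G x i j) :
    ∀ i j, Continuous fun x => (F x - G x) i j := by
  intro i j; simpa [Matrix.sub_apply] using (show Continuous fun x => F x i j - G x i j from (hF i j).sub (hG i j))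

theorem EC_add {F G : X → Matrix (Fin a) (Fin b) ℝ}
    (hF : ∀ i j, Continuous fun x => F x i j) (hG : ∀ i j, Continuous fun x => G x i j) :
    ∀ i j, Continuous fun x => (F x + G x) i j := by
  intro i j; simpa [Matrix.add_apply] using (show Continuous fun x => F x i j + G x i j from (hF i j).add (hG i j))

theorem EC_smul (t : ℝ) {F : X → Matrix (Fin a) (Fin b) ℝ}
    (hF : ∀ i j, Continuous fun x => F x i j) :
    ∀ i j, Continuous fun x => (t • F x) i j := by
  intro i j; simpa [Matrix.smul_apply, smul_eq_mul] using (show Continuous fun x => t * F x i j from continuous_const.mul (hF i j))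

theorem EC_mul (B : Matrix (Fin c) (Fin a) ℝ) {F : X → Matrix (Fin a) (Fin b) ℝ}
    (hF : ∀ i j, Continuous fun x => F x i j) :
    ∀ i j, Continuous fun x => (B * F x) i j := by
  intro i j
  have he : (fun x => (B * F x) i j) = fun x => ∑ k, B i k * F x k j := by
    funext x; rw [Matrix.mul_apply]
  rw [he]
  exact continuous_finset_sum _ fun k _ => continuous_const.mul (hF k j)

end CONT

/-- Existence of D-LADMM iterates. -/
theorem exists_iterates {m d n : ℕ} (f : Matrix (Fin d) (Fin n) ℝ → ℝ)
    (g : Matrix (Fin m) (Fin n) ℝ → ℝ) (A : Matrix (Fin m) (Fin d) ℝ)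
    (X : Matrix (Fin m) (Fin n) ℝ) (hf : ConvexOn ℝ Set.univ f) (hg : ConvexOn ℝ Set.univ g)
    (τ : ℝ) (hτ : 0 < τ) (Z0 : Matrix (Fin d) (Fin n) ℝ) (E0 l0 : Matrix (Fin m) (Fin n) ℝ) :
    ∃ (Zs : ℕ → Matrix (Fin d) (Fin n) ℝ) (Es ls : ℕ → Matrix (Fin m) (Fin n) ℝ),
      Zs 0 = Z0 ∧ Es 0 = E0 ∧ ls 0 = l0 ∧
      ∀ k, DLADMMStep f g A X A (constm τ) (constm 1) (Zs k) (Es k) (ls k)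
        (Zs (k+1)) (Es (k+1)) (ls (k+1)) := by
  have hstep : ∀ s : Triple m d n, ∃ t : Triple m d n,
      DLADMMStep f g A X A (constm τ) (constm 1) s.1 s.2.1 s.2.2 t.1 t.2.1 t.2.2 := by
    intro s
    obtain ⟨Z1, hZ1⟩ := exists_prox_min f hf τ hτ (Rmat A X A (constm τ) (constm 1) s.1 s.2.1 s.2.2)
    obtain ⟨E1, hE1⟩ := exists_prox_min g hg 1 one_pos (Smat A X (constm 1) Z1 s.2.2)
    exact ⟨⟨Z1, E1, s.2.2 + Matrix.hadamard (constm 1) (A * Z1 + E1 - X)⟩, hZ1, hE1, rfl⟩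
  choose F hF using hstep
  let S : ℕ → Triple m d n := fun k =>
    Nat.rec (motive := fun _ => Triple m d n) (⟨Z0, E0, l0⟩ : Triple m d n) (fun _ s => F s) k
  exact ⟨fun k => (S k).1, fun k => (S k).2.1, fun k => (S k).2.2,
    rfl, rfl, rfl, fun k => hF (S k)⟩

end HELP

section FINAL
open Filter Metric Set Topology
set_option maxHeartbeats 2000000
attribute [local instance] Matrix.normedAddCommGroup Matrix.normedSpace

/-- Theorem 1 of the paper: convergence of D-LADMM. Under Assumption 1
and nonemptiness of Ω*, for any initialization there exist a bound `c > 0` and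
parameters `(W_k, θ_k, β_k) ∈ S(σ_k, A)` with `0 ≤ σ_k ≤ c` whose D-LADMM iterates
converge in Frobenius norm to some `ω* ∈ Ω*`. -/
theorem dladmm_convergence {m d n : ℕ} [NeZero m] [NeZero d] [NeZero n]
    (f : Matrix (Fin d) (Fin n) ℝ → ℝ) (g : Matrix (Fin m) (Fin n) ℝ → ℝ)
    (hf : ConvexOn ℝ Set.univ f) (hg : ConvexOn ℝ Set.univ g)
    (A : Matrix (Fin m) (Fin d) ℝ) (X : Matrix (Fin m) (Fin n) ℝ)
    (hne : (OmegaStar f g A X).Nonempty)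
    (hassum : ∃ c : ℝ, 0 < c ∧ ∀ σ : ℝ, 0 ≤ σ → σ ≤ c → (Sset (n := n) σ A).Nonempty) :
    ∀ (Z0 : Matrix (Fin d) (Fin n) ℝ) (E0 l0 : Matrix (Fin m) (Fin n) ℝ),
      ∃ c : ℝ, 0 < c ∧
      ∃ (W : ℕ → Matrix (Fin m) (Fin d) ℝ) (θ : ℕ → Matrix (Fin d) (Fin n) ℝ)
        (β : ℕ → Matrix (Fin m) (Fin n) ℝ) (σ : ℕ → ℝ),
        (∀ k, 0 ≤ σ k ∧ σ k ≤ c ∧ (W k, θ k, β k) ∈ Sset (σ k) A) ∧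
        ∃ (Zs : ℕ → Matrix (Fin d) (Fin n) ℝ) (Es ls : ℕ → Matrix (Fin m) (Fin n) ℝ),
          Zs 0 = Z0 ∧ Es 0 = E0 ∧ ls 0 = l0 ∧
          (∀ k, DLADMMStep f g A X (W k) (θ k) (β k)
            (Zs k) (Es k) (ls k) (Zs (k+1)) (Es (k+1)) (ls (k+1))) ∧
          ∃ ωstar ∈ OmegaStar f g A X,
            Filter.Tendsto (fun k => tfnorm ((Zs k, Es k, -ls k) - ωstar))
              Filter.atTop (nhds 0) := by
  intro Z0 E0 l0
  have hτpos : (0:ℝ) < 1 + finner A A := by linarith [finner_self_nonneg A]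
  obtain ⟨Zs, Es, ls, hZ00, hE00, hl00, hstep⟩ :=
    exists_iterates f g A X hf hg (1 + finner A A) hτpos Z0 E0 l0
  set τ : ℝ := 1 + finner A A with hτ
  refine ⟨1, one_pos, fun _ => A, fun _ => constm τ, fun _ => constm 1, fun _ => 0,
    fun k => ⟨le_refl 0, zero_le_one, by rw [hτ]; exact mem_Sset_main A⟩,
    Zs, Es, ls, hZ00, hE00, hl00, hstep, ?_⟩
  have hsub : ∀ k,
      ((τ • (Zs k - Zs (k+1)) + Aᵀ * ((-ls k) - (A * Zs k + Es k - X))) ∈ subdiff f (Zs (k+1)))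
      ∧ ((-ls (k+1)) ∈ subdiff g (Es (k+1)))
      ∧ ((-ls (k+1) : Matrix (Fin m) (Fin n) ℝ)
          = (-ls k) - (A * Zs (k+1) + Es (k+1) - X)) :=
    fun k => step_subgrads hf hg hτpos (hstep k)
  set ω : ℕ → Triple m d n := fun k => (Zs k, Es k, -ls k) with hω
  have hone : ∀ (ωs : Triple m d n), ωs ∈ OmegaStar f g A X → ∀ k,
      Qq A τ (Zs (k+2) - ωs.1) (Es (k+2) - ωs.2.1) ((-ls (k+2)) - ωs.2.2)
        + (finner (Zs (k+1) - Zs (k+2)) (Zs (k+1) - Zs (k+2))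
          + finner (Es (k+1) - Es (k+2)) (Es (k+1) - Es (k+2))
          + finner ((-ls (k+1)) - (-ls (k+2))) ((-ls (k+1)) - (-ls (k+2))))
      ≤ Qq A τ (Zs (k+1) - ωs.1) (Es (k+1) - ωs.2.1) ((-ls (k+1)) - ωs.2.2) := by
    intro ωs hωs k
    exact onestep τ hτ (Zs (k+1)) (Zs (k+2)) ωs.1 (Es (k+1)) (Es (k+2)) ωs.2.1
      (-ls (k+1)) (-ls (k+2)) ωs.2.2 (hsub (k+1)).1 (hsub (k+1)).2.1 (hsub k).2.1
      (hsub (k+1)).2.2 hωs.1 hωs.2.1 hωs.2.2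
  have main : ∀ (ωs : Triple m d n), ωs ∈ OmegaStar f g A X →
      Antitone (fun j => Qq A τ (Zs (j+1) - ωs.1) (Es (j+1) - ωs.2.1) ((-ls (j+1)) - ωs.2.2)) := by
    intro ωs hωs
    apply antitone_nat_of_succ_le
    intro k
    have h := hone ωs hωs k
    have h1 := finner_self_nonneg (Zs (k+1) - Zs (k+2))
    have h2 := finner_self_nonneg (Es (k+1) - Es (k+2))
    have h3 := finner_self_nonneg ((-ls (k+1)) - (-ls (k+2)))
    show Qq A τ (Zs (k+2) - ωs.1) (Es (k+2) - ωs.2.1) ((-ls (k+2)) - ωs.2.2)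
      ≤ Qq A τ (Zs (k+1) - ωs.1) (Es (k+1) - ωs.2.1) ((-ls (k+1)) - ωs.2.2)
    linarith
  obtain ⟨ωs, hωs⟩ := hne
  set a : ℕ → ℝ :=
    fun j => Qq A τ (Zs (j+1) - ωs.1) (Es (j+1) - ωs.2.1) ((-ls (j+1)) - ωs.2.2) with haD
  have haanti : Antitone a := main ωs hωs
  have hannn : ∀ j, 0 ≤ a j := fun j => Qq_nonneg A hτ _ _ _
  have halim : Tendsto a atTop (𝓝 (⨅ j, a j)) :=
    tendsto_atTop_ciInf haanti ⟨0, by rintro x ⟨j, rfl⟩; exact hannn j⟩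
  have hashift : Tendsto (fun k => a (k+1)) atTop (𝓝 (⨅ j, a j)) :=
    halim.comp (tendsto_add_atTop_nat 1)
  have hdiff : Tendsto (fun k => a k - a (k+1)) atTop (𝓝 0) := by
    simpa using halim.sub hashift
  set dd : ℕ → ℝ := fun j => finner (Zs j - Zs (j+1)) (Zs j - Zs (j+1))
    + finner (Es j - Es (j+1)) (Es j - Es (j+1))
    + finner ((-ls j) - (-ls (j+1))) ((-ls j) - (-ls (j+1))) with hddD
  have hdd0 : ∀ j, 0 ≤ dd j := by
    intro j
    have h1 := finner_self_nonneg (Zs j - Zs (j+1))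
    have h2 := finner_self_nonneg (Es j - Es (j+1))
    have h3 := finner_self_nonneg ((-ls j) - (-ls (j+1)))
    show (0:ℝ) ≤ finner (Zs j - Zs (j+1)) (Zs j - Zs (j+1))
      + finner (Es j - Es (j+1)) (Es j - Es (j+1))
      + finner ((-ls j) - (-ls (j+1))) ((-ls j) - (-ls (j+1)))
    linarith
  have hkey : ∀ k, a (k+1) + dd (k+1) ≤ a k := by
    intro k
    exact hone ωs hωs k
  have hddlim : Tendsto (fun k => dd (k+1)) atTop (𝓝 0) :=
    squeeze_zero (fun k => hdd0 (k+1)) (fun k => by linarith [hkey k]) hdiff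
  have hbound : ∀ j, ω (j+2) ∈ closedBall ωs (Real.sqrt (a 0)) := by
    intro j
    rw [mem_closedBall, dist_eq_norm]
    have h2 := Qq_lower A hτ (Zs (j+2) - ωs.1) (Es (j+2) - ωs.2.1) ((-ls (j+2)) - ωs.2.2)
    have h3 : a (j+1) ≤ a 0 := haanti (Nat.zero_le (j+1))
    have h4 : tinner (ω (j+2) - ωs) (ω (j+2) - ωs) ≤ a 0 := by
      calc tinner (ω (j+2) - ωs) (ω (j+2) - ωs)
          = finner (Zs (j+2) - ωs.1) (Zs (j+2) - ωs.1)
            + finner (Es (j+2) - ωs.2.1) (Es (j+2) - ωs.2.1)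
            + finner ((-ls (j+2)) - ωs.2.2) ((-ls (j+2)) - ωs.2.2) := rfl
        _ ≤ Qq A τ (Zs (j+2) - ωs.1) (Es (j+2) - ωs.2.1) ((-ls (j+2)) - ωs.2.2) := h2
        _ ≤ a 0 := h3
    calc ‖ω (j+2) - ωs‖ ≤ Real.sqrt (tinner (ω (j+2) - ωs) (ω (j+2) - ωs)) := triple_norm_le _
      _ ≤ Real.sqrt (a 0) := Real.sqrt_le_sqrt h4
  obtain ⟨ωbar, hωbarmem, φ, hφmono, hφtend⟩ :=
    tendsto_subseq_of_bounded (isBounded_closedBall (x := ωs) (r := Real.sqrt (a 0))) hbound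
  have hφtend' : Tendsto (fun j => ω (φ j + 2)) atTop (𝓝 ωbar) := hφtend
  have hδ : Tendsto (fun j => ω (j+1) - ω (j+2)) atTop (𝓝 0) := by
    have hb : Tendsto (fun j => Real.sqrt (dd (j+1))) atTop (𝓝 0) := by
      have h2 := (Real.continuous_sqrt.tendsto 0).comp hddlim
      simpa [Real.sqrt_zero, Function.comp_def] using h2
    refine squeeze_zero_norm (fun j => ?_) hb
    have h1 : tinner (ω (j+1) - ω (j+2)) (ω (j+1) - ω (j+2)) = dd (j+1) := rfl
    calc ‖ω (j+1) - ω (j+2)‖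
        ≤ Real.sqrt (tinner (ω (j+1) - ω (j+2)) (ω (j+1) - ω (j+2))) := triple_norm_le _
      _ = Real.sqrt (dd (j+1)) := by rw [h1]
  have hδφ : Tendsto (fun j => ω (φ j + 1) - ω (φ j + 2)) atTop (𝓝 0) :=
    hδ.comp hφmono.tendsto_atTop
  have hprev : Tendsto (fun j => ω (φ j + 1)) atTop (𝓝 ωbar) := by
    have h2 := hδφ.add hφtend'
    simpa using h2
  have hfc : Continuous f := convexOn_continuous f hf
  have hgc : Continuous g := convexOn_continuous g hg
  have ce1 : ∀ (i : Fin d) (j : Fin n), Continuous fun v : Triple m d n => v.1 i j :=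
    fun i j => (entry_continuous i j).comp continuous_fst
  have ce2 : ∀ (i : Fin m) (j : Fin n), Continuous fun v : Triple m d n => v.2.1 i j :=
    fun i j => (entry_continuous i j).comp (continuous_fst.comp continuous_snd)
  have ce3 : ∀ (i : Fin m) (j : Fin n), Continuous fun v : Triple m d n => v.2.2 i j :=
    fun i j => (entry_continuous i j).comp (continuous_snd.comp continuous_snd)
  -- the constraint holds at the limit
  have hC : A * ωbar.1 + ωbar.2.1 = X := by
    set Cq : Triple m d n → ℝ :=
      fun v => finner (A * v.1 + v.2.1 - X) (A * v.1 + v.2.1 - X) with hCq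
    have hCE : ∀ i j, Continuous fun v : Triple m d n => (A * v.1 + v.2.1 - X) i j :=
      EC_sub (EC_add (EC_mul A ce1) ce2) (EC_const X)
    have hCqc : Continuous Cq := finner_continuous hCE hCE
    have hval : ∀ k : ℕ, Cq (ω (k+2))
        = finner ((-ls (k+1)) - (-ls (k+2))) ((-ls (k+1)) - (-ls (k+2))) := by
      intro k
      have he : A * Zs (k+2) + Es (k+2) - X = (-ls (k+1)) - (-ls (k+2)) := by
        rw [(hsub (k+1)).2.2]; abel
      show finner (A * Zs (k+2) + Es (k+2) - X) (A * Zs (k+2) + Es (k+2) - X) = _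
      rw [he]
    have hnn : ∀ j, 0 ≤ Cq (ω (φ j + 2)) := by
      intro j
      rw [hval (φ j)]
      exact finner_self_nonneg _
    have hub : ∀ j, Cq (ω (φ j + 2)) ≤ dd (φ j + 1) := by
      intro j
      rw [hval (φ j)]
      have h1 := finner_self_nonneg (Zs (φ j + 1) - Zs (φ j + 2))
      have h2 := finner_self_nonneg (Es (φ j + 1) - Es (φ j + 2))
      have he2 : dd (φ j + 1) = finner (Zs (φ j + 1) - Zs (φ j + 2)) (Zs (φ j + 1) - Zs (φ j + 2))
        + finner (Es (φ j + 1) - Es (φ j + 2)) (Es (φ j + 1) - Es (φ j + 2))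
        + finner ((-ls (φ j + 1)) - (-ls (φ j + 2))) ((-ls (φ j + 1)) - (-ls (φ j + 2))) := rfl
      rw [he2]
      linarith
    have hto0 : Tendsto (fun j => Cq (ω (φ j + 2))) atTop (𝓝 0) :=
      squeeze_zero hnn hub (hddlim.comp hφmono.tendsto_atTop)
    have hlim2 : Tendsto (fun j => Cq (ω (φ j + 2))) atTop (𝓝 (Cq ωbar)) :=
      (hCqc.tendsto ωbar).comp hφtend'
    have h0 : Cq ωbar = 0 := tendsto_nhds_unique hlim2 hto0
    by_contra hne'
    have hnz : A * ωbar.1 + ωbar.2.1 - X ≠ 0 := sub_ne_zero.mpr hne'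
    exact absurd h0 (ne_of_gt (finner_self_pos _ hnz))
  -- the g-subdifferential condition at the limit
  have hGsub : ωbar.2.2 ∈ subdiff g ωbar.2.1 := by
    intro Y
    set Ψ : Triple m d n → ℝ := fun v => g v.2.1 + finner v.2.2 (Y - v.2.1) with hΨ
    have hΨc : Continuous Ψ := by
      apply Continuous.add (hgc.comp (continuous_fst.comp continuous_snd))
      exact finner_continuous ce3 (EC_sub (EC_const Y) ce2)
    have hle : ∀ j, Ψ (ω (φ j + 2)) ≤ g Y := fun j => (hsub (φ j + 1)).2.1 Y
    have hlimΨ : Tendsto (fun j => Ψ (ω (φ j + 2))) atTop (𝓝 (Ψ ωbar)) :=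
      (hΨc.tendsto ωbar).comp hφtend'
    exact le_of_tendsto hlimΨ (Filter.Eventually.of_forall hle)
  -- the f-subdifferential condition at the limit
  have hFsub : Aᵀ * ωbar.2.2 ∈ subdiff f ωbar.1 := by
    intro Y
    set Φ : Triple m d n × Triple m d n → ℝ := fun v => f v.2.1
      + finner (τ • (v.1.1 - v.2.1) + Aᵀ * (v.1.2.2 - (A * v.1.1 + v.1.2.1 - X))) (Y - v.2.1)
      with hΦ
    have pe11 : ∀ (i : Fin d) (j : Fin n),
        Continuous fun v : Triple m d n × Triple m d n => v.1.1 i j :=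
      fun i j => (entry_continuous i j).comp (continuous_fst.comp continuous_fst)
    have pe121 : ∀ (i : Fin m) (j : Fin n),
        Continuous fun v : Triple m d n × Triple m d n => v.1.2.1 i j :=
      fun i j => (entry_continuous i j).comp
        ((continuous_fst.comp continuous_snd).comp continuous_fst)
    have pe122 : ∀ (i : Fin m) (j : Fin n),
        Continuous fun v : Triple m d n × Triple m d n => v.1.2.2 i j :=
      fun i j => (entry_continuous i j).comp
        ((continuous_snd.comp continuous_snd).comp continuous_fst)
    have pe21 : ∀ (i : Fin d) (j : Fin n),
        Continuous fun v : Triple m d n × Triple m d n => v.2.1 i j :=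
      fun i j => (entry_continuous i j).comp (continuous_fst.comp continuous_snd)
    have hG : ∀ i j, Continuous fun v : Triple m d n × Triple m d n =>
        (τ • (v.1.1 - v.2.1) + Aᵀ * (v.1.2.2 - (A * v.1.1 + v.1.2.1 - X))) i j :=
      EC_add (EC_smul τ (EC_sub pe11 pe21))
        (EC_mul Aᵀ (EC_sub pe122 (EC_sub (EC_add (EC_mul A pe11) pe121) (EC_const X))))
    have hΦc : Continuous Φ := by
      apply Continuous.add (hfc.comp (continuous_fst.comp continuous_snd))
      exact finner_continuous hG (EC_sub (EC_const Y) pe21)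
    have hle : ∀ j, Φ (ω (φ j + 1), ω (φ j + 2)) ≤ f Y := fun j => (hsub (φ j + 1)).1 Y
    have hpair : Tendsto (fun j => (ω (φ j + 1), ω (φ j + 2))) atTop (𝓝 (ωbar, ωbar)) :=
      hprev.prodMk_nhds hφtend'
    have hlimΦ : Tendsto (fun j => Φ (ω (φ j + 1), ω (φ j + 2))) atTop (𝓝 (Φ (ωbar, ωbar))) :=
      (hΦc.tendsto (ωbar, ωbar)).comp hpair
    have hfin := le_of_tendsto hlimΦ (Filter.Eventually.of_forall hle)
    have hval : Φ (ωbar, ωbar) = f ωbar.1 + finner (Aᵀ * ωbar.2.2) (Y - ωbar.1) := by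
      show f ωbar.1
        + finner (τ • (ωbar.1 - ωbar.1) + Aᵀ * (ωbar.2.2 - (A * ωbar.1 + ωbar.2.1 - X)))
          (Y - ωbar.1) = _
      have h1 : A * ωbar.1 + ωbar.2.1 - X = 0 := by rw [hC]; exact sub_self X
      rw [sub_self, smul_zero, h1, sub_zero, zero_add]
    rw [hval] at hfin
    exact hfin
  have hωbar : ωbar ∈ OmegaStar f g A X := ⟨hFsub, hGsub, hC⟩
  -- Fejér argument with the limit point
  set b : ℕ → ℝ :=
    fun j => Qq A τ (Zs (j+1) - ωbar.1) (Es (j+1) - ωbar.2.1) ((-ls (j+1)) - ωbar.2.2) with hbD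
  have hbanti : Antitone b := main ωbar hωbar
  have hbnn : ∀ j, 0 ≤ b j := fun j => Qq_nonneg A hτ _ _ _
  have hblim : Tendsto b atTop (𝓝 (⨅ j, b j)) :=
    tendsto_atTop_ciInf hbanti ⟨0, by rintro x ⟨j, rfl⟩; exact hbnn j⟩
  set Qc : Triple m d n → ℝ :=
    fun v => Qq A τ (v.1 - ωbar.1) (v.2.1 - ωbar.2.1) (v.2.2 - ωbar.2.2) with hQc
  have hQcc : Continuous Qc := by
    have hz : ∀ i j, Continuous fun v : Triple m d n => (v.1 - ωbar.1) i j :=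
      EC_sub ce1 (EC_const _)
    have he : ∀ i j, Continuous fun v : Triple m d n => (v.2.1 - ωbar.2.1) i j :=
      EC_sub ce2 (EC_const _)
    have hl : ∀ i j, Continuous fun v : Triple m d n => (v.2.2 - ωbar.2.2) i j :=
      EC_sub ce3 (EC_const _)
    have hAz : ∀ i j, Continuous fun v : Triple m d n => (A * (v.1 - ωbar.1)) i j :=
      EC_mul A hz
    exact (((continuous_const.mul (finner_continuous hz hz)).sub
      (finner_continuous hAz hAz)).add (finner_continuous he he)).add (finner_continuous hl hl)
  have hQc0 : Qc ωbar = 0 := by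
    show Qq A τ (ωbar.1 - ωbar.1) (ωbar.2.1 - ωbar.2.1) (ωbar.2.2 - ωbar.2.2) = 0
    simp only [sub_self, Qq, Matrix.mul_zero, finner_zero_left]
    ring
  have hbsub : Tendsto (fun j => b (φ j + 1)) atTop (𝓝 0) := by
    have h1 : Tendsto (fun j => Qc (ω (φ j + 2))) atTop (𝓝 (Qc ωbar)) :=
      (hQcc.tendsto ωbar).comp hφtend'
    rw [hQc0] at h1
    exact h1
  have hbsub2 : Tendsto (fun j => b (φ j + 1)) atTop (𝓝 (⨅ j, b j)) :=
    hblim.comp ((tendsto_add_atTop_nat 1).comp hφmono.tendsto_atTop)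
  have hinf0 : (⨅ j, b j) = 0 := tendsto_nhds_unique hbsub2 hbsub
  rw [hinf0] at hblim
  refine ⟨ωbar, hωbar, ?_⟩
  rw [← Filter.tendsto_add_atTop_iff_nat 1]
  have htin : Tendsto (fun k => tinner (ω (k+1) - ωbar) (ω (k+1) - ωbar)) atTop (𝓝 0) := by
    apply squeeze_zero (fun k => tinner_self_nonneg _) (fun k => ?_) hblim
    exact Qq_lower A hτ (Zs (k+1) - ωbar.1) (Es (k+1) - ωbar.2.1) ((-ls (k+1)) - ωbar.2.2)
  have hfinal : Tendsto (fun k => Real.sqrt (tinner (ω (k+1) - ωbar) (ω (k+1) - ωbar)))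
      atTop (𝓝 0) := by
    have h2 := (Real.continuous_sqrt.tendsto 0).comp htin
    simpa [Real.sqrt_zero, Function.comp_def] using h2
  exact hfinal

end FINAL

end
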